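/- arXiv:2006.08144 — 5 statements merged into one kernel-verified Lean document; each statement's English description precedes it below -/
import Mathlib

section
/- Let u ∈ R^n have strictly positive entries, v ∈ R^n have non-negative entries, and f : [0,∞) → R be convex with f(s) ≥ f(0) for all s ≥ 0. Then ∑_{i=1}^n f(u_i^↓ v_i^↑) ≤ ∑_{i=1}^n f(u_i v_i) ≤ ∑_{i=1}^n f(u_i^↓ v_i^↓). -/
/-!
A convex `f` on `[0, ∞)` with `f 0 ≤ f s` is nondecreasing there, and this makes
`(x, y) ↦ f (x * y)` supermodular on `[0, ∞)²`. For a supermodular pairing, swapping two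
mismatched entries into the same order never decreases the sum, so among all rearrangements the
similarly ordered pairing maximises the sum and the oppositely ordered one minimises it.
-/

/-- The vector `u` sorted in non-decreasing order. -/
noncomputable def sortAsc {n : ℕ} (u : Fin n → ℝ) : Fin n → ℝ := u ∘ Tuple.sort u

/-- The vector `u` sorted in non-increasing order. -/
noncomputable def sortDesc {n : ℕ} (u : Fin n → ℝ) : Fin n → ℝ := sortAsc u ∘ Fin.rev

open Equiv Equiv.Perm Finset

def SupermodularOn {α β γ : Type*} [LE α] [LE β] [Add γ] [LE γ] (G : α → β → γ) (s : Set α)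
    (t : Set β) : Prop :=
  ∀ ⦃x x'⦄, x ∈ s → x' ∈ s → ∀ ⦃y y'⦄, y ∈ t → y' ∈ t → x' ≤ x → y' ≤ y →
    G x y' + G x' y ≤ G x y + G x' y'

theorem SupermodularOn.mono {α β γ : Type*} [LE α] [LE β] [Add γ] [LE γ] {G : α → β → γ}
    {s s' : Set α} {t t' : Set β} (hG : SupermodularOn G s t) (hs : s' ⊆ s) (ht : t' ⊆ t) :
    SupermodularOn G s' t' :=
  fun _ _ hx hx' _ _ hy hy' ↦ hG (hs hx) (hs hx') (ht hy) (ht hy')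

section Rearrangement

variable {ι α β γ K : Type*} [Fintype ι] [AddCommMonoid γ] [PartialOrder γ] [IsOrderedAddMonoid γ]

theorem Equiv.Perm.sum_apply_le_sum_swap_mul_apply [DecidableEq ι] (F : ι → ι → γ) (σ : Perm ι)
    {a : ι} (ha : σ a ≠ a) (h : F a (σ a) + F (σ.symm a) a ≤ F a a + F (σ.symm a) (σ a)) :
    ∑ i, F i (σ i) ≤ ∑ i, F i ((swap a (σ a) * σ) i) := by
  have hja : σ.symm a ≠ a := fun heq ↦ ha (by simpa using congrArg σ heq.symm)
  rw [← sum_add_sum_compl {a, σ.symm a}, ← sum_add_sum_compl {a, σ.symm a} (fun i ↦ F i _),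
    sum_pair hja.symm, sum_pair hja.symm]
  refine add_le_add (by simpa using h) (sum_congr rfl fun i hi ↦ ?_).le
  simp only [mem_compl, mem_insert, mem_singleton, not_or] at hi
  rw [Perm.mul_apply, swap_apply_of_ne_of_ne]
  · exact fun hσi ↦ hi.2 (by simp [← hσi])
  · exact σ.injective.ne hi.1

/-- Undo `σ` one swap at a time, each swap fixing a `κ`-maximal point of the support;
`hF` says that such a swap does not decrease the sum. -/
theorem Equiv.Perm.sum_apply_le_sum_of_exchange [LinearOrder K] (F : ι → ι → γ) (κ : ι → K)
    (hF : ∀ a j k, κ j ≤ κ a → κ k ≤ κ a → F a k + F j a ≤ F a a + F j k) (σ : Perm ι) :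
    ∑ i, F i (σ i) ≤ ∑ i, F i i := by
  classical
  induction hn : σ.support.card using Nat.strong_induction_on generalizing σ with
  | _ n ih =>
  obtain rfl | hσ := eq_or_ne σ 1
  · simp
  have hne : σ.support.Nonempty := nonempty_iff_ne_empty.2 (support_eq_empty_iff.not.2 hσ)
  obtain ⟨a, ha, hmax⟩ := σ.support.exists_max_image κ hne
  have ha' : σ a ≠ a := mem_support.1 ha
  calc ∑ i, F i (σ i)
      ≤ ∑ i, F i ((swap a (σ a) * σ) i) :=
        σ.sum_apply_le_sum_swap_mul_apply F ha' <| hF _ _ _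
          (hmax _ (apply_mem_support.1 (by simpa using ha))) (hmax _ (by simpa using ha'))
    _ ≤ ∑ i, F i i := ih _ (hn ▸ card_support_swap_mul ha') _ rfl

variable [LinearOrder α] [LinearOrder β] {G : α → β → γ} {f : ι → α} {g : ι → β}

theorem Monovary.sum_comp_perm_le_sum_of_supermodularOn (hfg : Monovary f g)
    (hG : SupermodularOn G (Set.range f) (Set.range g)) (σ τ : Perm ι) :
    ∑ i, G (f (σ i)) (g (τ i)) ≤ ∑ i, G (f i) (g i) := by
  rw [← Equiv.sum_comp σ.symm]
  simp only [Equiv.apply_symm_apply]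
  refine (τ * σ⁻¹).sum_apply_le_sum_of_exchange (fun i k ↦ G (f i) (g k))
    (fun i ↦ toLex (g i, f i)) fun a j k hj hk ↦ hG (Set.mem_range_self a) (Set.mem_range_self j)
      (Set.mem_range_self a) (Set.mem_range_self k) ?_ (Prod.Lex.monotone_fst _ _ hk)
  obtain h | h := Prod.Lex.toLex_le_toLex.1 hj
  exacts [hfg h, h.2]

theorem Antivary.sum_le_sum_comp_perm_of_supermodularOn (hfg : Antivary f g)
    (hG : SupermodularOn G (Set.range f) (Set.range g)) (σ τ : Perm ι) :
    ∑ i, G (f i) (g i) ≤ ∑ i, G (f (σ i)) (g (τ i)) := by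
  rw [← Equiv.sum_comp σ.symm (fun i ↦ G (f (σ i)) (g (τ i)))]
  simp only [Equiv.apply_symm_apply]
  refine (τ * σ⁻¹).sum_apply_le_sum_of_exchange (γ := γᵒᵈ)
    (fun i k ↦ OrderDual.toDual (G (f i) (g k))) (fun i ↦ toLex (OrderDual.toDual (g i), f i))
    fun a j k hj hk ↦ ?_
  change G (f a) (g a) + G (f j) (g k) ≤ G (f a) (g k) + G (f j) (g a)
  refine hG (Set.mem_range_self a) (Set.mem_range_self j) (Set.mem_range_self k)
    (Set.mem_range_self a) ?_ (Prod.Lex.monotone_fst _ _ hk)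
  obtain h | h := Prod.Lex.toLex_le_toLex.1 hj
  exacts [hfg h, h.2]

end Rearrangement

section Convex

variable {𝕜 β : Type*} [Field 𝕜] [LinearOrder 𝕜] [IsStrictOrderedRing 𝕜]

theorem ConvexOn.map_add_map_le_of_add_eq [AddCommMonoid β] [PartialOrder β]
    [IsOrderedAddMonoid β] [Module 𝕜 β] {s : Set 𝕜} {f : 𝕜 → β} (hf : ConvexOn 𝕜 s f)
    {m p q M : 𝕜} (hm : m ∈ s) (hM : M ∈ s) (hmp : m ≤ p) (hpM : p ≤ M) (hsum : p + q = m + M) :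
    f p + f q ≤ f m + f M := by
  obtain hmM | hmM := (hmp.trans hpM).eq_or_lt
  · obtain rfl : p = m := le_antisymm (hpM.trans_eq hmM.symm) hmp
    obtain rfl : q = M := by linear_combination hsum
    rfl
  have hMm : 0 < M - m := sub_pos.2 hmM
  set a := (M - p) / (M - m)
  set b := (p - m) / (M - m)
  have ha : 0 ≤ a := div_nonneg (sub_nonneg.2 hpM) hMm.le
  have hb : 0 ≤ b := div_nonneg (sub_nonneg.2 hmp) hMm.le
  have hab : a + b = 1 := by rw [← add_div, div_eq_one_iff_eq hMm.ne']; ring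
  have hp : a • m + b • M = p := by
    simp only [smul_eq_mul, a, b]; field_simp; ring
  have hq : b • m + a • M = q := by
    obtain rfl : q = m + M - p := by linear_combination hsum
    simp only [smul_eq_mul, a, b]; field_simp; ring
  calc f p + f q ≤ (a • f m + b • f M) + (b • f m + a • f M) := by
        rw [← hp, ← hq]
        exact add_le_add (hf.2 hm hM ha hb hab) (hf.2 hm hM hb ha (by rw [add_comm, hab]))
    _ = f m + f M := by
        rw [add_add_add_comm, ← add_smul, add_comm (b • f M), ← add_smul, hab,
          one_smul, one_smul]

theorem ConvexOn.monotoneOn_of_le_apply [AddCommMonoid β] [LinearOrder β]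
    [IsOrderedCancelAddMonoid β] [Module 𝕜 β] [PosSMulStrictMono 𝕜 β] {f : 𝕜 → β} {a : 𝕜}
    (hf : ConvexOn 𝕜 (Set.Ici a) f) (ha : ∀ x, a ≤ x → f a ≤ f x) : MonotoneOn f (Set.Ici a) := by
  intro x hx y hy hxy
  obtain rfl | hax := (Set.mem_Ici.1 hx).eq_or_lt
  · exact ha y hy
  · exact hf.le_right_of_left_le'' Set.self_mem_Ici hy hax hxy (ha x hx)

/-- The two products `x₁ * y₂` and `x₂ * y₁` lie in `[x₂ * y₂, x₁ * y₁]`, and their sum is at most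
`x₁ * y₁ + x₂ * y₂`; monotonicity makes up the difference. -/
theorem ConvexOn.supermodularOn_comp_mul [AddCommMonoid β] [PartialOrder β]
    [IsOrderedAddMonoid β] [Module 𝕜 β] {f : 𝕜 → β} (hf : ConvexOn 𝕜 (Set.Ici 0) f)
    (hmono : MonotoneOn f (Set.Ici 0)) :
    SupermodularOn (fun x y ↦ f (x * y)) (Set.Ici (0 : 𝕜)) (Set.Ici 0) := by
  intro x₁ x₂ hx₁ hx₂ y₁ y₂ hy₁ hy₂ hx hy
  rw [Set.mem_Ici] at hx₁ hx₂ hy₁ hy₂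
  have hq : x₂ * y₁ ≤ x₂ * y₂ + x₁ * y₁ - x₁ * y₂ := by
    nlinarith [mul_nonneg (sub_nonneg.2 hx) (sub_nonneg.2 hy)]
  calc f (x₁ * y₂) + f (x₂ * y₁) ≤ f (x₁ * y₂) + f (x₂ * y₂ + x₁ * y₁ - x₁ * y₂) :=
        add_le_add le_rfl (hmono (mul_nonneg hx₂ hy₁) ((mul_nonneg hx₂ hy₁).trans hq) hq)
    _ ≤ f (x₂ * y₂) + f (x₁ * y₁) :=
        hf.map_add_map_le_of_add_eq (mul_nonneg hx₂ hy₂) (mul_nonneg hx₁ hy₁)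
          (mul_le_mul_of_nonneg_right hx hy₂) (mul_le_mul_of_nonneg_left hy hx₁) (by ring)
    _ = f (x₁ * y₁) + f (x₂ * y₂) := add_comm _ _

end Convex

section Sorting

variable {n : ℕ} (u : Fin n → ℝ)

theorem monotone_sortAsc : Monotone (sortAsc u) := Tuple.monotone_sort u

theorem antitone_sortDesc : Antitone (sortDesc u) :=
  (monotone_sortAsc u).comp_antitone fun _ _ ↦ Fin.rev_le_rev.2

theorem range_sortAsc : Set.range (sortAsc u) = Set.range u :=
  (Tuple.sort u).surjective.range_comp u

theorem range_sortDesc : Set.range (sortDesc u) = Set.range u :=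
  (Fin.rev_surjective.range_comp _).trans (range_sortAsc u)

theorem exists_perm_sortAsc_apply : ∃ σ : Perm (Fin n), ∀ i, sortAsc u (σ i) = u i :=
  ⟨(Tuple.sort u).symm, fun i ↦ by simp [sortAsc]⟩

theorem exists_perm_sortDesc_apply : ∃ σ : Perm (Fin n), ∀ i, sortDesc u (σ i) = u i :=
  ⟨(Fin.revPerm.trans (Tuple.sort u)).symm, fun i ↦ by simp [sortDesc, sortAsc]⟩

end Sorting

/-- London's rearrangement theorem. -/
theorem london_rearrangement {n : ℕ} (u v : Fin n → ℝ) (hu : ∀ i, 0 < u i)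
    (hv : ∀ i, 0 ≤ v i) (f : ℝ → ℝ) (hconv : ConvexOn ℝ (Set.Ici 0) f)
    (hf0 : ∀ s : ℝ, 0 ≤ s → f 0 ≤ f s) :
    ∑ i, f (sortDesc u i * sortAsc v i) ≤ ∑ i, f (u i * v i) ∧
      ∑ i, f (u i * v i) ≤ ∑ i, f (sortDesc u i * sortDesc v i) := by
  have hG := hconv.supermodularOn_comp_mul (hconv.monotoneOn_of_le_apply hf0)
  have hu' : Set.range (sortDesc u) ⊆ Set.Ici 0 :=
    (range_sortDesc u).trans_subset (Set.range_subset_iff.2 fun i ↦ (hu i).le)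
  have hv' : Set.range v ⊆ Set.Ici 0 := Set.range_subset_iff.2 hv
  obtain ⟨σ, hσ⟩ := exists_perm_sortDesc_apply u
  obtain ⟨τ, hτ⟩ := exists_perm_sortAsc_apply v
  obtain ⟨ρ, hρ⟩ := exists_perm_sortDesc_apply v
  constructor
  · have h := ((antitone_sortDesc u).antivary (monotone_sortAsc v))
      |>.sum_le_sum_comp_perm_of_supermodularOn
        (hG.mono hu' ((range_sortAsc v).trans_subset hv')) σ τ
    simpa only [hσ, hτ] using h
  · have h := ((antitone_sortDesc u).monovary (antitone_sortDesc v))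
      |>.sum_comp_perm_le_sum_of_supermodularOn
        (hG.mono hu' ((range_sortDesc v).trans_subset hv')) σ ρ
    simpa only [hσ, hρ] using h
end

section
/- Let f : (0,∞) → R be differentiable such that s ↦ s·f'(s) is monotonically decreasing on (0,∞). Then for all vectors u, v ∈ R^n with strictly positive entries, ∑_{i=1}^n f(u_i^↑ v_i^↓) ≥ ∑_{i=1}^n f(u_i v_i) ≥ ∑_{i=1}^n f(u_i^↓ v_i^↓). -/
/-!
For `0 < b ≤ b'` the function `t ↦ f (t * b') - f (t * b)` has derivative
`((t * b') * f' (t * b') - (t * b) * f' (t * b)) / t ≤ 0`, so it is antitone; this is the exchange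
inequality `f (a * b) + f (a' * b') ≤ f (a * b') + f (a' * b)` for `0 < a ≤ a'`, `0 < b ≤ b'`.
Hence `F i j = f (u↑ i * v↑ j)` is a Monge array, and for a Monge array `∑ i, F i (σ i)` is
smallest for the identity and largest for the order-reversing permutation: moving the largest
non-fixed point of `σ` into place never increases the sum.
-/

open Finset Equiv

section Monge

variable {α β : Type*} [LinearOrder α] [Fintype α]
  [AddCommGroup β] [PartialOrder β] [IsOrderedAddMonoid β] {F : α → α → β}

theorem sum_diag_le_sum_perm
    (hF : ∀ ⦃i i' j j'⦄, i ≤ i' → j ≤ j' → F i j + F i' j' ≤ F i j' + F i' j)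
    (σ : Perm α) : ∑ i, F i i ≤ ∑ i, F i (σ i) := by
  induction hc : #σ.support using Nat.strong_induction_on generalizing σ with
  | _ c ih =>
  rcases σ.support.eq_empty_or_nonempty with hempty | hne
  · simp [Perm.support_eq_empty_iff.1 hempty]
  set i := σ.support.max' hne
  have hi : σ i ≠ i := Perm.mem_support.1 (max'_mem _ hne)
  set j := σ.symm i
  have hσi : σ i ≤ i := le_max' _ _ (Perm.apply_mem_support.2 (max'_mem _ hne))
  have hσj : σ j = i := σ.apply_symm_apply i
  have hj : j ≤ i := le_max' _ _ (Perm.apply_mem_support.1 (hσj ▸ max'_mem _ hne))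
  have hji : j ≠ i := fun h => hi (h ▸ hσj)
  refine (ih _ (hc ▸ Perm.card_support_swap_mul hi) _ rfl).trans ?_
  rw [← sub_nonneg, ← sum_sub_distrib, Fintype.sum_eq_add j i hji]
  · rw [Perm.mul_apply, Perm.mul_apply, hσj, swap_apply_left, swap_apply_right,
      sub_add_sub_comm, sub_nonneg]
    exact hF hj hσi
  · rintro k ⟨hkj, hki⟩
    rw [Perm.mul_apply, swap_apply_of_ne_of_ne (hσj ▸ σ.injective.ne hkj) (σ.injective.ne hki),
      sub_self]

theorem sum_perm_le_sum_antitone_perm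
    (hF : ∀ ⦃i i' j j'⦄, i ≤ i' → j ≤ j' → F i j + F i' j' ≤ F i j' + F i' j)
    {ρ : Perm α} (hρ : Antitone ρ) (σ : Perm α) : ∑ i, F i (σ i) ≤ ∑ i, F i (ρ i) := by
  have hG : ∀ ⦃i i' j j'⦄, i ≤ i' → j ≤ j' →
      -F i (ρ j) + -F i' (ρ j') ≤ -F i (ρ j') + -F i' (ρ j) := fun i i' j j' hi hj => by
    rw [← neg_add, ← neg_add, neg_le_neg_iff]
    exact hF hi (hρ hj)
  simpa [sum_neg_distrib] using sum_diag_le_sum_perm hG (ρ.symm * σ)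

end Monge

section ExchangeInequality

variable {f f' : ℝ → ℝ} (hderiv : ∀ s ∈ Set.Ioi (0 : ℝ), HasDerivAt f (f' s) s)
  (hmono : AntitoneOn (fun s => s * f' s) (Set.Ioi 0))
include hderiv hmono

theorem antitoneOn_comp_mul_sub_comp_mul {b b' : ℝ} (hb : 0 < b) (hbb : b ≤ b') :
    AntitoneOn (fun t => f (t * b') - f (t * b)) (Set.Ioi 0) := by
  have hb' : 0 < b' := hb.trans_le hbb
  have hd : ∀ t ∈ Set.Ioi (0 : ℝ),
      HasDerivAt (fun t => f (t * b') - f (t * b)) (f' (t * b') * b' - f' (t * b) * b) t :=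
    fun t ht => ((hderiv _ (mul_pos ht hb')).comp t (hasDerivAt_mul_const b')).sub
      ((hderiv _ (mul_pos ht hb)).comp t (hasDerivAt_mul_const b))
  refine antitoneOn_of_hasDerivWithinAt_nonpos (convex_Ioi 0)
    (fun t ht => (hd t ht).continuousAt.continuousWithinAt)
    (by simpa only [interior_Ioi] using fun t ht => (hd t ht).hasDerivWithinAt) ?_
  simp only [interior_Ioi, Set.mem_Ioi]
  intro t ht
  have hm := hmono (mul_pos ht hb) (mul_pos ht hb') (mul_le_mul_of_nonneg_left hbb ht.le)
  refine nonpos_of_mul_nonpos_right ?_ ht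
  linear_combination hm

theorem map_mul_add_map_mul_le {a a' b b' : ℝ} (ha : 0 < a) (hb : 0 < b) (haa : a ≤ a')
    (hbb : b ≤ b') : f (a * b) + f (a' * b') ≤ f (a * b') + f (a' * b) := by
  have := antitoneOn_comp_mul_sub_comp_mul hderiv hmono hb hbb ha (ha.trans_le haa) haa
  linarith

end ExchangeInequality

/-- Vector rearrangement inequality for `f` with `s ↦ s * f' s` decreasing. -/
theorem vector_rearrangement_decreasing {n : ℕ} (f f' : ℝ → ℝ)
    (hderiv : ∀ s ∈ Set.Ioi (0 : ℝ), HasDerivAt f (f' s) s)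
    (hmono : AntitoneOn (fun s => s * f' s) (Set.Ioi 0))
    (u v : Fin n → ℝ) (hu : ∀ i, 0 < u i) (hv : ∀ i, 0 < v i) :
    ∑ i, f (u i * v i) ≤ ∑ i, f (sortAsc u i * sortDesc v i) ∧
      ∑ i, f (sortDesc u i * sortDesc v i) ≤ ∑ i, f (u i * v i) := by
  have hF : ∀ ⦃i i' j j'⦄, i ≤ i' → j ≤ j' →
      f (sortAsc u i * sortAsc v j) + f (sortAsc u i' * sortAsc v j') ≤
        f (sortAsc u i * sortAsc v j') + f (sortAsc u i' * sortAsc v j) :=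
    fun i i' j j' hi hj => map_mul_add_map_mul_le hderiv hmono (hu _) (hv _)
      (Tuple.monotone_sort u hi) (Tuple.monotone_sort v hj)
  have hsorted : ∑ i, f (u i * v i) =
      ∑ i, f (sortAsc u i * sortAsc v ((Tuple.sort u).trans (Tuple.sort v).symm i)) := by
    rw [← Equiv.sum_comp (Tuple.sort u)]
    simp [sortAsc]
  have hdesc : ∑ i, f (sortDesc u i * sortDesc v i) = ∑ i, f (sortAsc u i * sortAsc v i) :=
    Equiv.sum_comp Fin.revPerm fun i => f (sortAsc u i * sortAsc v i)
  rw [hsorted, hdesc]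
  exact ⟨sum_perm_le_sum_antitone_perm hF (ρ := Fin.revPerm) (fun _ _ => Fin.rev_le_rev.2) _,
    sum_diag_le_sum_perm hF _⟩
end

section
/- Let f : (0,∞) → R be differentiable, and let a ≥ b > 0 and c ≥ d > 0. If s ↦ s·f'(s) is monotonically increasing on (0,∞), then f(ac) + f(bd) - f(ad) - f(bc) ≥ 0. -/
/-!
Put `g t = f (t c) - f (t d)`. Then `t g'(t) = (t c) f'(t c) - (t d) f'(t d) ≥ 0` because
`s ↦ s f'(s)` is monotone, so `g` is monotone on `(0, ∞)`, and `g b ≤ g a` is the claim.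
-/

open Set

lemma HasDerivAt.comp_mul_const {f : ℝ → ℝ} {f' x c : ℝ} (hf : HasDerivAt f f' (x * c)) :
    HasDerivAt (fun t => f (t * c)) (f' * c) x :=
  hf.comp x (hasDerivAt_mul_const c)

lemma monotoneOn_sub_comp_mul_of_monotoneOn_mul_deriv {f f' : ℝ → ℝ}
    (hderiv : ∀ s ∈ Ioi (0 : ℝ), HasDerivAt f (f' s) s)
    (hmono : MonotoneOn (fun s => s * f' s) (Ioi 0)) {c d : ℝ} (hd : 0 < d) (hcd : d ≤ c) :
    MonotoneOn (fun t => f (t * c) - f (t * d)) (Ioi 0) := by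
  have hc : 0 < c := hd.trans_le hcd
  have hg : ∀ t ∈ Ioi (0 : ℝ),
      HasDerivAt (fun t => f (t * c) - f (t * d)) (f' (t * c) * c - f' (t * d) * d) t :=
    fun t ht =>
      (hderiv _ (mul_pos ht hc)).comp_mul_const.sub (hderiv _ (mul_pos ht hd)).comp_mul_const
  refine monotoneOn_of_hasDerivWithinAt_nonneg (convex_Ioi 0)
    (fun t ht => (hg t ht).continuousAt.continuousWithinAt)
    (fun t ht => (hg t (interior_subset ht)).hasDerivWithinAt) fun t ht => ?_
  rw [interior_Ioi] at ht
  have hmul : t * d * f' (t * d) ≤ t * c * f' (t * c) :=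
    hmono (mul_pos ht hd) (mul_pos ht hc) (mul_le_mul_of_nonneg_left hcd ht.le)
  refine nonneg_of_mul_nonneg_right (a := t) ?_ ht
  linarith

/-- The two-element exchange inequality. -/
theorem exchange_inequality (f f' : ℝ → ℝ)
    (hderiv : ∀ s ∈ Set.Ioi (0 : ℝ), HasDerivAt f (f' s) s)
    (hmono : MonotoneOn (fun s => s * f' s) (Set.Ioi 0))
    (a b c d : ℝ) (hb : 0 < b) (hab : b ≤ a) (hd : 0 < d) (hcd : d ≤ c) :
    0 ≤ f (a * c) + f (b * d) - f (a * d) - f (b * c) := by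
  have h := monotoneOn_sub_comp_mul_of_monotoneOn_mul_deriv hderiv hmono hd hcd
    (mem_Ioi.2 hb) (mem_Ioi.2 (hb.trans_le hab)) hab
  dsimp only at h
  linarith
end

section
/- Let A, B be n×n real positive semidefinite matrices and q ≥ 1 an integer. Then Tr((B^{1/2} A B^{1/2})^q) ≤ ∑_{i=1}^n λ_i(A)^q · λ_i(B)^q. -/
/-- The eigenvalues of a Hermitian real matrix, in non-increasing order. -/
noncomputable def eigDesc {n : ℕ} {A : Matrix (Fin n) (Fin n) ℝ} (hA : A.IsHermitian) :
    Fin n → ℝ :=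
  sortDesc hA.eigenvalues

section
open scoped ComplexOrder
/-- The positive semidefinite square root of a positive semidefinite matrix
(the definition `Matrix.PosSemidef.sqrt` of the older Mathlib, since removed). -/
noncomputable def Matrix.PosSemidef.sqrt {n : Type*} [Fintype n] [DecidableEq n] {𝕜 : Type*}
    [RCLike 𝕜] {A : Matrix n n 𝕜} (hA : A.PosSemidef) : Matrix n n 𝕜 :=
  hA.1.eigenvectorUnitary.1 * Matrix.diagonal ((↑) ∘ (√·) ∘ hA.1.eigenvalues) *
  (star hA.1.eigenvectorUnitary : Matrix n n 𝕜)
end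

/-!
For `k ≤ n` let `Cₖ` be the `k`-th compound matrix, the matrix of `⋀ᵏ`. It is multiplicative,
commutes with transposition and sends `U diag(d) Uᵀ` to `Cₖ(U) diag(∏_{i ∈ S} dᵢ) Cₖ(U)ᵀ`, so for
`X ⪰ 0` the top of the Rayleigh quotient of `Cₖ(X)` is the product of the `k` largest eigenvalues
of `X`. Writing `M = Pᵀ A P` with `P = B^{1/2}` and taking a unit top eigenvector `w` of `Cₖ(M)`
and `z = Cₖ(P) w`, Horn's inequality follows:
`∏_{j<k} λⱼ(M) = zᵀ Cₖ(A) z ≤ ∏_{j<k} λⱼ(A) · wᵀ Cₖ(B) w ≤ ∏_{j<k} λⱼ(A) λⱼ(B)`.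
Hence `λ(M)^q` is weakly log-majorized by `λ(A)^q λ(B)^q`. For a nonincreasing nonnegative
sequence this implies weak majorization, by `x - y ≤ x (log x - log y)` and Abel summation, and
`Tr(M^q) = ∑ λᵢ(M)^q`.
-/

open Finset Matrix
open Set (powersetCard)

namespace Matrix

section Compound

variable {ι R : Type*} [Fintype ι] [LinearOrder ι] [CommRing R] {k : ℕ}

noncomputable def compound (k : ℕ) :
    Matrix ι ι R →* Matrix (powersetCard ι k) (powersetCard ι k) R where
  toFun X := LinearMap.toMatrix ((Pi.basisFun R ι).exteriorPower k)
    ((Pi.basisFun R ι).exteriorPower k) (exteriorPower.map k X.toLin')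
  map_one' := by rw [toLin'_one, exteriorPower.map_id, LinearMap.toMatrix_id]
  map_mul' X Y := by
    rw [toLin'_mul X Y, exteriorPower.map_comp,
      LinearMap.toMatrix_comp _ ((Pi.basisFun R ι).exteriorPower k)]

theorem compound_apply (X : Matrix ι ι R) (S T : powersetCard ι k) :
    compound k X S T = (X.submatrix (powersetCard.ofFinEmbEquiv.symm S)
      (powersetCard.ofFinEmbEquiv.symm T)).det := by
  rw [← det_transpose]
  simp only [compound, MonoidHom.coe_mk, OneHom.coe_mk, LinearMap.toMatrix_apply,
    exteriorPower.coe_basis, exteriorPower.ιMulti_family, exteriorPower.map_apply_ιMulti,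
    exteriorPower.basis_repr_apply, exteriorPower.ιMultiDual_apply_ιMulti, Function.comp_apply,
    Pi.basisFun_apply, toLin'_apply, mulVec_single, MulOpposite.op_one, one_smul,
    Module.Basis.coord_apply, Pi.basisFun_repr, col_apply, transpose_submatrix]
  rfl

theorem compound_transpose (X : Matrix ι ι R) : compound k Xᵀ = (compound k X)ᵀ := by
  ext S T
  rw [transpose_apply, compound_apply, compound_apply, ← transpose_submatrix, det_transpose]

theorem compound_diagonal (d : ι → R) :
    compound k (diagonal d) = diagonal fun S : powersetCard ι k => ∏ i ∈ (S : Finset ι), d i := by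
  ext S T
  rw [compound_apply]
  by_cases hST : S = T
  · subst hST
    rw [submatrix_diagonal _ _ (powersetCard.ofFinEmbEquiv.symm S).injective, det_diagonal,
      diagonal_apply_eq]
    conv_rhs => rw [← image_orderEmbOfFin_univ (S : Finset ι) (powersetCard.card_eq S)]
    rw [prod_image ((S : Finset ι).orderEmbOfFin _).injective.injOn]
    rfl
  · rw [diagonal_apply_ne _ hST]
    obtain ⟨i, hiS, hiT⟩ := (powersetCard.exists_mem_notMem_iff_ne S T).mp hST
    obtain ⟨a, rfl⟩ := (powersetCard.mem_range_ofFinEmbEquiv_symm_iff_mem S i).mpr hiS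
    refine det_eq_zero_of_row_eq_zero a fun j => diagonal_apply_ne _ fun h => hiT ?_
    exact h ▸ (powersetCard.mem_range_ofFinEmbEquiv_symm_iff_mem T _).mp ⟨j, rfl⟩

theorem compound_mem_orthogonalGroup {U : Matrix ι ι R} (hU : U ∈ orthogonalGroup ι R) :
    compound k U ∈ orthogonalGroup (powersetCard ι k) R := by
  rw [mem_orthogonalGroup_iff] at hU ⊢
  rw [← compound_transpose, ← map_mul, hU, map_one]

theorem compound_mul_diagonal_mul_transpose (U : Matrix ι ι R) (d : ι → R) :
    compound k (U * diagonal d * Uᵀ) =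
      compound k U * diagonal (fun S : powersetCard ι k => ∏ i ∈ (S : Finset ι), d i) *
        (compound k U)ᵀ := by
  rw [map_mul, map_mul, compound_diagonal, compound_transpose]

end Compound

section QuadraticForm

variable {ι : Type*} [Fintype ι]

theorem dotProduct_transpose_mul_mul_mulVec {m R : Type*} [Fintype m] [CommSemiring R]
    (X : Matrix m ι R) (Y : Matrix m m R) (w : ι → R) :
    w ⬝ᵥ (Xᵀ * Y * X) *ᵥ w = (X *ᵥ w) ⬝ᵥ Y *ᵥ (X *ᵥ w) := by
  rw [← mulVec_mulVec, ← mulVec_mulVec, dotProduct_mulVec, vecMul_transpose]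

variable [DecidableEq ι]

theorem dotProduct_transpose_mulVec_self {U : Matrix ι ι ℝ} (hU : U ∈ orthogonalGroup ι ℝ)
    (v : ι → ℝ) : (Uᵀ *ᵥ v) ⬝ᵥ (Uᵀ *ᵥ v) = v ⬝ᵥ v := by
  have h := dotProduct_transpose_mul_mul_mulVec Uᵀ 1 v
  rwa [transpose_transpose, Matrix.mul_one, (mem_orthogonalGroup_iff ι ℝ).mp hU, one_mulVec,
    one_mulVec, eq_comm] at h

theorem dotProduct_mul_diagonal_mul_transpose_mulVec_le {U : Matrix ι ι ℝ}
    (hU : U ∈ orthogonalGroup ι ℝ) {d : ι → ℝ} {c : ℝ} (hd : ∀ i, d i ≤ c) (v : ι → ℝ) :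
    v ⬝ᵥ (U * diagonal d * Uᵀ) *ᵥ v ≤ c * (v ⬝ᵥ v) := by
  have h := dotProduct_transpose_mul_mul_mulVec Uᵀ (diagonal d) v
  rw [transpose_transpose] at h
  rw [h, ← dotProduct_transpose_mulVec_self hU v]
  simp only [dotProduct, mulVec_diagonal, mul_sum]
  exact sum_le_sum fun i _ => by nlinarith [hd i, mul_self_nonneg ((Uᵀ *ᵥ v) i)]

theorem exists_dotProduct_mul_diagonal_mul_transpose_mulVec_eq {U : Matrix ι ι ℝ}
    (hU : U ∈ orthogonalGroup ι ℝ) (d : ι → ℝ) (i : ι) :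
    ∃ w : ι → ℝ, w ⬝ᵥ w = 1 ∧ w ⬝ᵥ (U * diagonal d * Uᵀ) *ᵥ w = d i := by
  have hw : Uᵀ *ᵥ (U *ᵥ Pi.single i 1) = Pi.single i 1 := by
    rw [mulVec_mulVec, (mem_orthogonalGroup_iff' ι ℝ).mp hU, one_mulVec]
  refine ⟨U *ᵥ Pi.single i 1, ?_, ?_⟩
  · rw [← dotProduct_transpose_mulVec_self hU, hw, single_dotProduct, Pi.single_eq_same, one_mul]
  · have h := dotProduct_transpose_mul_mul_mulVec Uᵀ (diagonal d) (U *ᵥ Pi.single i 1)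
    rw [transpose_transpose] at h
    rw [h, hw, mulVec_single_one, single_dotProduct, one_mul, col_apply, diagonal_apply_eq]

end QuadraticForm

theorem IsHermitian.exists_orthogonal_eq_mul_diagonal_mul_transpose {ι : Type*} [Fintype ι]
    [DecidableEq ι] {A : Matrix ι ι ℝ} (hA : A.IsHermitian) :
    ∃ U ∈ orthogonalGroup ι ℝ, A = U * diagonal hA.eigenvalues * Uᵀ := by
  have hstar : star (hA.eigenvectorUnitary : Matrix ι ι ℝ) =
      (hA.eigenvectorUnitary : Matrix ι ι ℝ)ᵀ :=
    conjTranspose_eq_transpose_of_trivial _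
  refine ⟨hA.eigenvectorUnitary, ?_, ?_⟩
  · rw [mem_orthogonalGroup_iff, ← hstar]
    exact mem_unitaryGroup_iff.mp hA.eigenvectorUnitary.2
  · conv_lhs => rw [hA.spectral_theorem, Unitary.conjStarAlgAut_apply, hstar]
    simp only [RCLike.ofReal_real_eq_id, Function.id_comp]

theorem IsHermitian.trace_pow {ι 𝕜 : Type*} [Fintype ι] [DecidableEq ι] [RCLike 𝕜]
    {A : Matrix ι ι 𝕜} (hA : A.IsHermitian) (q : ℕ) :
    (A ^ q).trace = ∑ i, (hA.eigenvalues i : 𝕜) ^ q := by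
  conv_lhs => rw [hA.spectral_theorem, ← map_pow, Unitary.conjStarAlgAut_apply]
  rw [trace_mul_cycle, Unitary.coe_star_mul_self, Matrix.one_mul, diagonal_pow, trace_diagonal]
  rfl

theorem PosSemidef.transpose_sqrt {ι : Type*} [Fintype ι] [DecidableEq ι] {B : Matrix ι ι ℝ}
    (hB : B.PosSemidef) : hB.sqrtᵀ = hB.sqrt := by
  simp [sqrt, transpose_mul, star_eq_conjTranspose, conjTranspose_eq_transpose_of_trivial,
    Matrix.mul_assoc]

theorem PosSemidef.sqrt_mul_sqrt {ι : Type*} [Fintype ι] [DecidableEq ι] {B : Matrix ι ι ℝ}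
    (hB : B.PosSemidef) : hB.sqrt * hB.sqrt = B := by
  conv_rhs => rw [hB.1.spectral_theorem, Unitary.conjStarAlgAut_apply]
  simp only [sqrt, Matrix.mul_assoc]
  rw [← Matrix.mul_assoc (star _) _ _, Unitary.coe_star_mul_self, Matrix.one_mul,
    ← Matrix.mul_assoc (diagonal _), diagonal_mul_diagonal]
  congr 3
  ext i
  simp [Real.mul_self_sqrt (hB.eigenvalues_nonneg i)]

end Matrix

section Sorting

variable {n k : ℕ}

theorem sortDesc_antitone (u : Fin n → ℝ) : Antitone (sortDesc u) :=
  fun _ _ hij => Tuple.monotone_sort u (Fin.rev_le_rev.2 hij)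

theorem sortDesc_eq_comp (u : Fin n → ℝ) :
    sortDesc u = u ∘ (Fin.revPerm.trans (Tuple.sort u)) := rfl

theorem Fin.val_le_of_strictMono {f : Fin k → Fin n} (hf : StrictMono f) (j : Fin k) :
    (j : ℕ) ≤ f j := by
  have h := card_le_card_of_injOn f (s := Iic j) (t := Iic (f j))
    (fun i hi => by simpa using hf.monotone (by simpa using hi)) hf.injective.injOn
  simpa using h

theorem prod_le_prod_take_of_antitone {w : Fin n → ℝ} (hw : Antitone w) (hw0 : ∀ i, 0 ≤ w i)
    (hk : k ≤ n) (T : Finset (Fin n)) (hT : #T = k) :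
    ∏ i ∈ T, w i ≤ ∏ i, Fin.take k hk w i := by
  conv_lhs => rw [← image_orderEmbOfFin_univ T hT]
  rw [prod_image (T.orderEmbOfFin hT).injective.injOn]
  exact prod_le_prod (fun _ _ => hw0 _)
    fun j _ => hw (Fin.val_le_of_strictMono (T.orderEmbOfFin hT).strictMono j)

theorem prod_le_prod_take_sortDesc {x : Fin n → ℝ} (hx : ∀ i, 0 ≤ x i) (hk : k ≤ n)
    (S : Finset (Fin n)) (hS : #S = k) :
    ∏ i ∈ S, x i ≤ ∏ i, Fin.take k hk (sortDesc x) i := by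
  set σ := Fin.revPerm.trans (Tuple.sort x)
  have hx' : ∏ i ∈ S, x i = ∏ i ∈ S.map σ.symm.toEmbedding, sortDesc x i := by
    simp [sortDesc_eq_comp, σ]
  rw [hx']
  exact prod_le_prod_take_of_antitone (sortDesc_antitone x) (fun i => hx _) hk _
    (by rw [card_map, hS])

theorem exists_prod_eq_prod_take_sortDesc (x : Fin n → ℝ) (hk : k ≤ n) :
    ∃ S : Finset (Fin n), #S = k ∧ ∏ i ∈ S, x i = ∏ i, Fin.take k hk (sortDesc x) i := by
  set e : Fin k ↪ Fin n :=
    (Fin.castLEEmb hk).trans (Fin.revPerm.trans (Tuple.sort x)).toEmbedding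
  refine ⟨univ.map e, by simp, ?_⟩
  rw [prod_map]
  rfl

end Sorting

section Majorization

variable {n : ℕ}

theorem sum_mul_nonpos_of_antitone {u d : Fin n → ℝ} (hu : Antitone u) (hu0 : ∀ i, 0 ≤ u i)
    (hd : ∀ k (hk : k ≤ n), ∑ i, Fin.take k hk d i ≤ 0) : ∑ i, u i * d i ≤ 0 := by
  induction n with
  | zero => simp
  | succ n ih =>
    -- Abel summation step: shift the weights by the last one, which multiplies the full sum.
    have hsplit : ∑ i, u i * d i = ∑ i : Fin n, (u i.castSucc - u (Fin.last n)) * d i.castSucc +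
        u (Fin.last n) * ∑ i, d i := by
      simp only [Fin.sum_univ_castSucc, sub_mul, sum_sub_distrib, mul_add, mul_sum]
      ring
    have hinit : ∑ i : Fin n, (u i.castSucc - u (Fin.last n)) * d i.castSucc ≤ 0 :=
      ih (fun i j hij => sub_le_sub_right (hu (Fin.castSucc_le_castSucc_iff.2 hij)) _)
        (fun i => sub_nonneg.2 (hu (Fin.le_last _))) (fun k hk => hd k (hk.trans n.le_succ))
    have hlast : u (Fin.last n) * ∑ i, d i ≤ 0 :=
      mul_nonpos_of_nonneg_of_nonpos (hu0 _) (by simpa using hd (n + 1) le_rfl)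
    linarith

theorem sum_le_sum_of_prod_take_le_of_pos {u v : Fin n → ℝ} (hu : Antitone u)
    (hu0 : ∀ i, 0 < u i) (hv0 : ∀ i, 0 < v i)
    (h : ∀ k (hk : k ≤ n), ∏ i, Fin.take k hk u i ≤ ∏ i, Fin.take k hk v i) :
    ∑ i, u i ≤ ∑ i, v i := by
  have hpoint : ∀ i, u i - v i ≤ u i * (Real.log (u i) - Real.log (v i)) := by
    intro i
    have h := Real.log_le_sub_one_of_pos (div_pos (hv0 i) (hu0 i))
    rw [Real.log_div (hv0 i).ne' (hu0 i).ne', le_sub_iff_add_le, le_div_iff₀ (hu0 i)] at h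
    linarith
  have habel : ∑ i, u i * (Real.log (u i) - Real.log (v i)) ≤ 0 := by
    refine sum_mul_nonpos_of_antitone hu (fun i => (hu0 i).le) fun k hk => ?_
    simp only [Fin.take_apply, sum_sub_distrib]
    rw [← Real.log_prod fun i _ => (hu0 _).ne', ← Real.log_prod fun i _ => (hv0 _).ne', sub_nonpos]
    exact Real.log_le_log (prod_pos fun i _ => hu0 _) (h k hk)
  have := (sum_le_sum fun i _ => hpoint i).trans habel
  rw [sum_sub_distrib] at this
  linarith

theorem sum_le_sum_of_prod_take_le {u v : Fin n → ℝ} (hu : Antitone u)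
    (hu0 : ∀ i, 0 ≤ u i) (hv0 : ∀ i, 0 ≤ v i)
    (h : ∀ k (hk : k ≤ n), ∏ i, Fin.take k hk u i ≤ ∏ i, Fin.take k hk v i) :
    ∑ i, u i ≤ ∑ i, v i := by
  induction n with
  | zero => simp
  | succ n ih =>
    rcases (hu0 (Fin.last n)).eq_or_lt with hlast | hlast
    · rw [Fin.sum_univ_castSucc, Fin.sum_univ_castSucc v, ← hlast, add_zero]
      exact (ih (v := v ∘ Fin.castSucc) (hu.comp_monotone Fin.strictMono_castSucc.monotone)
        (fun _ => hu0 _) (fun _ => hv0 _) fun k hk => h k (hk.trans n.le_succ)).trans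
          (le_add_of_nonneg_right (hv0 _))
    · have hpos : ∀ i, 0 < u i := fun i => hlast.trans_le (hu (Fin.le_last i))
      refine sum_le_sum_of_prod_take_le_of_pos hu hpos (fun i => (hv0 i).lt_of_ne' fun hvi => ?_) h
      have hzero : ∏ j, Fin.take (i + 1) i.isLt v j = 0 :=
        prod_eq_zero (mem_univ (Fin.last i)) hvi
      have hupos : 0 < ∏ j, Fin.take (i + 1) i.isLt u j := prod_pos fun j _ => hpos _
      linarith [h (i + 1) i.isLt]

end Majorization

section Eigenvalues

variable {n k : ℕ}

theorem eigDesc_antitone {A : Matrix (Fin n) (Fin n) ℝ} (hA : A.IsHermitian) :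
    Antitone (eigDesc hA) :=
  sortDesc_antitone _

theorem Matrix.PosSemidef.eigDesc_nonneg {A : Matrix (Fin n) (Fin n) ℝ} (hA : A.PosSemidef)
    (i : Fin n) : 0 ≤ eigDesc hA.1 i :=
  hA.eigenvalues_nonneg _

theorem Matrix.IsHermitian.trace_pow_eq_sum_eigDesc_pow {A : Matrix (Fin n) (Fin n) ℝ}
    (hA : A.IsHermitian) (q : ℕ) : (A ^ q).trace = ∑ i, eigDesc hA i ^ q := by
  rw [hA.trace_pow, eigDesc, sortDesc_eq_comp]
  exact (Equiv.sum_comp _ fun i => hA.eigenvalues i ^ q).symm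

theorem Matrix.PosSemidef.dotProduct_compound_mulVec_le {A : Matrix (Fin n) (Fin n) ℝ}
    (hA : A.PosSemidef) (hk : k ≤ n) (v : powersetCard (Fin n) k → ℝ) :
    v ⬝ᵥ compound k A *ᵥ v ≤ (∏ i, Fin.take k hk (eigDesc hA.1) i) * (v ⬝ᵥ v) := by
  obtain ⟨U, hU, hAU⟩ := hA.1.exists_orthogonal_eq_mul_diagonal_mul_transpose
  conv_lhs => rw [hAU, compound_mul_diagonal_mul_transpose]
  exact dotProduct_mul_diagonal_mul_transpose_mulVec_le (compound_mem_orthogonalGroup hU)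
    (fun S => prod_le_prod_take_sortDesc hA.eigenvalues_nonneg hk S (powersetCard.card_eq S)) v

theorem Matrix.IsHermitian.exists_dotProduct_compound_mulVec_eq {M : Matrix (Fin n) (Fin n) ℝ}
    (hM : M.IsHermitian) (hk : k ≤ n) :
    ∃ w : powersetCard (Fin n) k → ℝ,
      w ⬝ᵥ w = 1 ∧ w ⬝ᵥ compound k M *ᵥ w = ∏ i, Fin.take k hk (eigDesc hM) i := by
  obtain ⟨S, hS, hSprod⟩ := exists_prod_eq_prod_take_sortDesc hM.eigenvalues hk
  obtain ⟨U, hU, hMU⟩ := hM.exists_orthogonal_eq_mul_diagonal_mul_transpose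
  have h := exists_dotProduct_mul_diagonal_mul_transpose_mulVec_eq
    (compound_mem_orthogonalGroup (k := k) hU)
    (fun T : powersetCard (Fin n) k => ∏ i ∈ (T : Finset (Fin n)), hM.eigenvalues i)
    ⟨S, powersetCard.mem_iff.mpr hS⟩
  rwa [← compound_mul_diagonal_mul_transpose, ← hMU, hSprod] at h

theorem prod_take_eigDesc_le_mul_prod_take_eigDesc {A B M P : Matrix (Fin n) (Fin n) ℝ}
    (hA : A.PosSemidef) (hB : B.PosSemidef) (hM : M.IsHermitian) (hMP : M = Pᵀ * A * P)
    (hPB : Pᵀ * P = B) (hk : k ≤ n) :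
    ∏ i, Fin.take k hk (eigDesc hM) i ≤
      (∏ i, Fin.take k hk (eigDesc hA.1) i) * ∏ i, Fin.take k hk (eigDesc hB.1) i := by
  obtain ⟨w, hw, hwM⟩ := hM.exists_dotProduct_compound_mulVec_eq hk
  have hCM : compound k M = (compound k P)ᵀ * compound k A * compound k P := by
    rw [hMP, map_mul, map_mul, compound_transpose]
  have hCB : compound k B = (compound k P)ᵀ * 1 * compound k P := by
    rw [Matrix.mul_one, ← compound_transpose, ← map_mul, hPB]
  set a := ∏ i, Fin.take k hk (eigDesc hA.1) i
  set b := ∏ i, Fin.take k hk (eigDesc hB.1) i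
  set z := compound k P *ᵥ w
  calc ∏ i, Fin.take k hk (eigDesc hM) i = w ⬝ᵥ compound k M *ᵥ w := hwM.symm
    _ = z ⬝ᵥ compound k A *ᵥ z := by rw [hCM, dotProduct_transpose_mul_mul_mulVec]
    _ ≤ a * (z ⬝ᵥ z) := hA.dotProduct_compound_mulVec_le hk z
    _ = a * (w ⬝ᵥ compound k B *ᵥ w) := by
      rw [hCB, dotProduct_transpose_mul_mul_mulVec, one_mulVec]
    _ ≤ a * (b * (w ⬝ᵥ w)) := mul_le_mul_of_nonneg_left (hB.dotProduct_compound_mulVec_le hk w)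
      (prod_nonneg fun i _ => hA.eigDesc_nonneg _)
    _ = a * b := by rw [hw, mul_one]

end Eigenvalues

theorem carlen_lieb_upper_general {n : ℕ} {A B : Matrix (Fin n) (Fin n) ℝ}
    (hA : A.PosSemidef) (hB : B.PosSemidef) (q : ℕ) :
    ((hB.sqrt * A * hB.sqrt) ^ q).trace ≤
      ∑ i, eigDesc hA.1 i ^ q * eigDesc hB.1 i ^ q := by
  have hM : (hB.sqrt * A * hB.sqrt).PosSemidef := by
    simpa [conjTranspose_eq_transpose_of_trivial, hB.transpose_sqrt] using
      hA.conjTranspose_mul_mul_same hB.sqrt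
  rw [hM.1.trace_pow_eq_sum_eigDesc_pow]
  refine sum_le_sum_of_prod_take_le
    (fun i j hij => pow_le_pow_left₀ (hM.eigDesc_nonneg j) (eigDesc_antitone hM.1 hij) q)
    (fun i => pow_nonneg (hM.eigDesc_nonneg i) q)
    (fun i => mul_nonneg (pow_nonneg (hA.eigDesc_nonneg i) q) (pow_nonneg (hB.eigDesc_nonneg i) q))
    fun k hk => ?_
  simp only [Fin.take_apply, ← mul_pow, Finset.prod_pow, prod_mul_distrib]
  exact pow_le_pow_left₀ (prod_nonneg fun i _ => hM.eigDesc_nonneg _)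
    (prod_take_eigDesc_le_mul_prod_take_eigDesc hA hB hM.1 (by rw [hB.transpose_sqrt])
      (by rw [hB.transpose_sqrt, hB.sqrt_mul_sqrt]) hk) q

/-- Carlen–Lieb upper bound for integer powers:
`Tr((B^{1/2} A B^{1/2})^q) ≤ ∑ λᵢ(A)^q λᵢ(B)^q`. -/
theorem carlen_lieb_upper {n : ℕ} {A B : Matrix (Fin n) (Fin n) ℝ}
    (hA : A.PosSemidef) (hB : B.PosSemidef) (q : ℕ) (hq : 1 ≤ q) :
    ((hB.sqrt * A * hB.sqrt) ^ q).trace ≤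
      ∑ i, eigDesc hA.1 i ^ q * eigDesc hB.1 i ^ q :=
  carlen_lieb_upper_general hA hB q
end

section
/- Let α, β be real numbers with α·β > 0 and α + β ≠ 0, and define f(s) = log((α s^β + β s^{−α})/(α + β)) for s > 0. Then s ↦ s·f'(s) is strictly increasing on (0,∞); in particular (s f'(s))' = α β (α+β)² s^{β−α−1} / (α s^β + β s^{−α})² > 0 for all s > 0. -/
/-! With `g(s) = α s^β + β s^(-α)` one has `s g'(s) = αβ (s^β - s^(-α))`, so
`s f'(s) = αβ (s^β - s^(-α)) / g(s)`. The quotient rule gives a numerator in which the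
`s^(2β)` and `s^(-2α)` terms cancel, leaving `αβ (α+β)² s^(β-α-1) / g(s)²`, which is positive
because `αβ > 0` and `α + β ≠ 0`. -/

namespace ABLogDet

variable {α β s : ℝ}

theorem hasDerivAt_rpow_const_of_pos (p : ℝ) (hs : 0 < s) :
    HasDerivAt (fun t : ℝ => t ^ p) (p * s ^ p / s) s := by
  have h := Real.hasDerivAt_rpow_const (p := p) (Or.inl hs.ne')
  rwa [Real.rpow_sub_one hs.ne', mul_div_assoc'] at h

theorem mul_denom_pos (hαβ : 0 < α * β) (hs : 0 < s) :
    0 < α * (α * s ^ β + β * s ^ (-α)) := by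
  have hα : α ≠ 0 := left_ne_zero_of_mul hαβ.ne'
  rw [mul_add, ← mul_assoc, ← mul_assoc]
  exact add_pos (mul_pos (mul_self_pos.mpr hα) (Real.rpow_pos_of_pos hs β))
    (mul_pos hαβ (Real.rpow_pos_of_pos hs (-α)))

theorem denom_ne_zero (hαβ : 0 < α * β) (hs : 0 < s) : α * s ^ β + β * s ^ (-α) ≠ 0 :=
  right_ne_zero_of_mul (mul_denom_pos hαβ hs).ne'

theorem hasDerivAt_denom (hs : 0 < s) :
    HasDerivAt (fun t : ℝ => α * t ^ β + β * t ^ (-α))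
      (α * β * (s ^ β - s ^ (-α)) / s) s :=
  (((hasDerivAt_rpow_const_of_pos β hs).const_mul α).add
    ((hasDerivAt_rpow_const_of_pos (-α) hs).const_mul β)).congr_deriv (by ring)

theorem mul_deriv_log_kernel (hs : 0 < s) (hg : α * s ^ β + β * s ^ (-α) ≠ 0)
    (hsum : α + β ≠ 0) :
    s * deriv (fun t : ℝ => Real.log ((α * t ^ β + β * t ^ (-α)) / (α + β))) s =
      α * β * (s ^ β - s ^ (-α)) / (α * s ^ β + β * s ^ (-α)) := by
  rw [(((hasDerivAt_denom hs).div_const (α + β)).log (div_ne_zero hg hsum)).deriv]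
  field_simp

theorem hasDerivAt_mul_deriv_log_kernel (hs : 0 < s) (hg : α * s ^ β + β * s ^ (-α) ≠ 0) :
    HasDerivAt (fun t : ℝ => α * β * (t ^ β - t ^ (-α)) / (α * t ^ β + β * t ^ (-α)))
      (α * β * (α + β) ^ 2 * s ^ (β - α - 1) / (α * s ^ β + β * s ^ (-α)) ^ 2) s := by
  have hnum : HasDerivAt (fun t : ℝ => α * β * (t ^ β - t ^ (-α)))
      (α * β * (β * s ^ β / s - -α * s ^ (-α) / s)) s :=
    ((hasDerivAt_rpow_const_of_pos β hs).sub (hasDerivAt_rpow_const_of_pos (-α) hs)).const_mul _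
  refine (hnum.div (hasDerivAt_denom hs) hg).congr_deriv ?_
  have hexp : s ^ (β - α - 1) = s ^ β * s ^ (-α) / s := by
    rw [sub_eq_add_neg β α, Real.rpow_sub_one hs.ne', Real.rpow_add hs]
  rw [hexp]
  field_simp
  ring

end ABLogDet

open ABLogDet in
/-- For the kernel `f(s) = log((α s^β + β s^(-α)) / (α + β))` of the Alpha-Beta
log-det divergence with `αβ > 0` and `α + β ≠ 0`, the map `s ↦ s * f'(s)` is strictly
increasing on `(0,∞)`; in particular its derivative is
`αβ(α+β)² s^(β-α-1) / (α s^β + β s^(-α))² > 0`. -/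
theorem ab_logdet_kernel_strictMono (α β : ℝ) (hαβ : 0 < α * β) (hsum : α + β ≠ 0) :
    StrictMonoOn
        (fun s : ℝ =>
          s * deriv (fun t : ℝ => Real.log ((α * t ^ β + β * t ^ (-α)) / (α + β))) s)
        (Set.Ioi 0) ∧
      ∀ s ∈ Set.Ioi (0 : ℝ),
        HasDerivAt
            (fun s : ℝ =>
              s * deriv (fun t : ℝ => Real.log ((α * t ^ β + β * t ^ (-α)) / (α + β))) s)
            (α * β * (α + β) ^ 2 * s ^ (β - α - 1) /
              (α * s ^ β + β * s ^ (-α)) ^ 2) s ∧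
          0 < α * β * (α + β) ^ 2 * s ^ (β - α - 1) /
              (α * s ^ β + β * s ^ (-α)) ^ 2 := by
  have hderiv : ∀ s ∈ Set.Ioi (0 : ℝ), HasDerivAt
      (fun s : ℝ =>
        s * deriv (fun t : ℝ => Real.log ((α * t ^ β + β * t ^ (-α)) / (α + β))) s)
      (α * β * (α + β) ^ 2 * s ^ (β - α - 1) / (α * s ^ β + β * s ^ (-α)) ^ 2) s := by
    intro s (hs : 0 < s)
    refine (hasDerivAt_mul_deriv_log_kernel hs (denom_ne_zero hαβ hs)).congr_of_eventuallyEq ?_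
    filter_upwards [Ioi_mem_nhds hs] with t (ht : 0 < t)
    exact mul_deriv_log_kernel ht (denom_ne_zero hαβ ht) hsum
  have hpos : ∀ s ∈ Set.Ioi (0 : ℝ),
      0 < α * β * (α + β) ^ 2 * s ^ (β - α - 1) / (α * s ^ β + β * s ^ (-α)) ^ 2 := by
    intro s (hs : 0 < s)
    have := denom_ne_zero hαβ hs
    have := Real.rpow_pos_of_pos hs (β - α - 1)
    positivity
  refine ⟨strictMonoOn_of_deriv_pos (convex_Ioi 0)
    (fun s hs => (hderiv s hs).continuousAt.continuousWithinAt) fun s hs => ?_,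
    fun s hs => ⟨hderiv s hs, hpos s hs⟩⟩
  rw [interior_Ioi] at hs
  rw [(hderiv s hs).deriv]
  exact hpos s hs
end
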